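/- Let X and Y be non-empty forests over an alphabet 𝒳 and let c be a cost function over 𝒳 that is non-negative, self-equal, and conforms to the triangular inequality. Then for all valid pre-order indices i of X and j of Y, the tree edit distance between the subtrees x̄_i and ȳ_j satisfies: d_c(x̄_i, ȳ_j) = min { c(x_i, −) + D_c(X[i+1, rl_X(i)], Y[j, rl_Y(j)]); c(−, y_j) + D_c(X[i, rl_X(i)], Y[j+1, rl_Y(j)]); c(x_i, y_j) + D_c(X[i+1, rl_X(i)], Y[j+1, rl_Y(j)]) }. -/

import Mathlib

namespace TED

/-- A tree over an alphabet `α`: a label together with a (possibly empty) list of children. -/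
inductive PTree (α : Type) where
  | node : α → List (PTree α) → PTree α

/-- A forest over `α` is a finite list of trees; `[]` is the empty forest `ε`. -/
abbrev Forest (α : Type) := List (PTree α)

namespace PTree

/-- The label of (the root of) a tree. -/
def label {α : Type} : PTree α → α
  | node a _ => a

/-- The children of (the root of) a tree. -/
def children {α : Type} : PTree α → List (PTree α)
  | node _ cs => cs

mutual
  /-- The number of nodes of a tree. -/
  def size {α : Type} : PTree α → ℕ
    | node _ cs => 1 + sizeL cs
  /-- The number of nodes of a forest. -/
  def sizeL {α : Type} : List (PTree α) → ℕ
    | [] => 0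
    | t :: ts => size t + sizeL ts
end

mutual
  /-- The pre-order list of all subtrees of a tree. -/
  def subtreesT {α : Type} : PTree α → List (PTree α)
    | node a cs => node a cs :: subtreesL cs
  /-- The pre-order list of all subtrees of a forest. -/
  def subtreesL {α : Type} : List (PTree α) → List (PTree α)
    | [] => []
    | t :: ts => subtreesT t ++ subtreesL ts
end

end PTree

open PTree

/-- The pre-order `π(X)` of a forest: the list of all its subtrees. -/
def preorder {α : Type} (F : Forest α) : List (PTree α) := PTree.subtreesL F

/-- The size `|X|` of a forest: the length of its pre-order. -/
def fsize {α : Type} (F : Forest α) : ℕ := (preorder F).length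

/-- The `i`-th subtree `x̄_i` (1-indexed pre-order) of a forest, if it exists. -/
def treeAt {α : Type} (F : Forest α) (i : ℕ) : Option (PTree α) := (preorder F)[i - 1]?

/-- The label `x_i` of the `i`-th subtree, as an element of `𝒳 ∪ {−}`
(`none` plays the role of the gap symbol `−`). -/
def labelAt {α : Type} (F : Forest α) (i : ℕ) : Option α := (treeAt F i).map PTree.label

/-- The number of nodes of the `i`-th subtree `x̄_i`. -/
def sizeAt {α : Type} (F : Forest α) (i : ℕ) : ℕ := ((treeAt F i).map PTree.size).getD 0

/-- A cost function over `α`: a real-valued function on `(𝒳 ∪ {−}) × (𝒳 ∪ {−})`,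
where the gap symbol `−` is modelled by `none`. -/
abbrev Cost (α : Type) := Option α → Option α → ℝ

/-- `c` is non-negative. -/
def Nonneg {α : Type} (c : Cost α) : Prop := ∀ x y, 0 ≤ c x y
/-- `c` is self-equal. -/
def SelfEq {α : Type} (c : Cost α) : Prop := ∀ x, c x x = 0
/-- `c` is discernible. -/
def Discernible {α : Type} (c : Cost α) : Prop := ∀ x y, x ≠ y → 0 < c x y
/-- `c` is symmetric. -/
def Symm {α : Type} (c : Cost α) : Prop := ∀ x y, c x y = c y x
/-- `c` conforms to the triangular inequality. -/
def Triangle {α : Type} (c : Cost α) : Prop := ∀ x y z, c x z ≤ c x y + c y z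

/-- Deletion of the first root: its children are spliced into its place. -/
def delRoot {α : Type} : Forest α → Forest α
  | [] => []
  | PTree.node _ cs :: ts => cs ++ ts

/-- Replacement of the label of the first root by `y`. -/
def repRoot {α : Type} (y : α) : Forest α → Forest α
  | [] => []
  | PTree.node _ cs :: ts => PTree.node y cs :: ts

/-- Insertion of a new root labeled `y` at root level, adopting the trees
`l` to `r-1` of the forest as its children. -/
def insRoot {α : Type} (y : α) (l r : ℕ) (F : Forest α) : Forest α :=
  if r > F.length + 1 ∨ l > r ∨ l < 1 then F
  else if l = r then F.take (l - 1) ++ [PTree.node y []] ++ F.drop (l - 1)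
  else F.take (l - 1) ++ [PTree.node y ((F.drop (l - 1)).take (r - l))] ++ F.drop (r - 1)

/-- `del_i`: deletion of the node with pre-order index `i`. -/
def applyDel {α : Type} : ℕ → Forest α → Forest α
  | _, [] => []
  | i, PTree.node a cs :: ts =>
    if i < 1 then PTree.node a cs :: ts
    else if i = 1 then delRoot (PTree.node a cs :: ts)
    else if i ≤ size (PTree.node a cs) then PTree.node a (applyDel (i - 1) cs) :: ts
    else PTree.node a cs :: applyDel (i - size (PTree.node a cs)) ts
  termination_by _ F => sizeOf F

/-- `rep_{i,y}`: replacement of the label of the node with pre-order index `i` by `y`. -/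
def applyRep {α : Type} (y : α) : ℕ → Forest α → Forest α
  | _, [] => []
  | i, PTree.node a cs :: ts =>
    if i < 1 then PTree.node a cs :: ts
    else if i = 1 then repRoot y (PTree.node a cs :: ts)
    else if i ≤ size (PTree.node a cs) then PTree.node a (applyRep y (i - 1) cs) :: ts
    else PTree.node a cs :: applyRep y (i - size (PTree.node a cs)) ts
  termination_by _ F => sizeOf F

/-- `ins_{i,y,l,r}`: insertion of a node labeled `y` as a child of the node with
pre-order index `i` (at root level if `i = 0`), adopting that node's children
`l` through `r-1` as its children. -/
def applyIns {α : Type} (y : α) (l r : ℕ) : ℕ → Forest α → Forest α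
  | 0, F => insRoot y l r F
  | _ + 1, [] => []
  | i + 1, PTree.node a cs :: ts =>
    if i + 1 ≤ size (PTree.node a cs) then PTree.node a (applyIns y l r i cs) :: ts
    else PTree.node a cs :: applyIns y l r (i + 1 - size (PTree.node a cs)) ts
  termination_by _ F => sizeOf F

/-- The standard edits: deletions `del_i`, replacements `rep_{i,y}` and
insertions `ins_{i,y,l,r}`. -/
inductive Edit (α : Type) where
  | del (i : ℕ)
  | rep (i : ℕ) (y : α)
  | ins (i : ℕ) (y : α) (l r : ℕ)

/-- Application of a single edit to a forest. -/
def Edit.apply {α : Type} : Edit α → Forest α → Forest α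
  | .del i, F => applyDel i F
  | .rep i y, F => applyRep y i F
  | .ins i y l r, F => applyIns y l r i F

/-- Application of an edit script `δ̄ = δ₁,…,δ_T` to a forest (left to right). -/
def applyScript {α : Type} (δ : List (Edit α)) (F : Forest α) : Forest α :=
  δ.foldl (fun F e => e.apply F) F

open Classical in
/-- The cost of a single edit with respect to the forest it is applied to:
`0` if the edit leaves the forest unchanged, and otherwise `c(x_i, y)` for a
replacement, `c(x_i, −)` for a deletion and `c(−, y)` for an insertion. -/
noncomputable def editCost {α : Type} (c : Cost α) (e : Edit α) (F : Forest α) : ℝ :=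
  if e.apply F = F then 0
  else
    match e with
    | .del i => c (labelAt F i) none
    | .rep i y => c (labelAt F i) (some y)
    | .ins _ y _ _ => c none (some y)

/-- The cost `c(δ̄, X)` of an edit script: the sum of the costs of its edits,
each evaluated on the forest to which it is applied. -/
noncomputable def scriptCost {α : Type} (c : Cost α) : List (Edit α) → Forest α → ℝ
  | [], _ => 0
  | e :: es, F => editCost c e F + scriptCost c es (e.apply F)

/-- The (subforest) edit distance `D_c(F, G)`: the infimum of the costs of edit
scripts transforming `F` into `G`. -/
noncomputable def fdist {α : Type} (c : Cost α) (F G : Forest α) : ℝ :=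
  sInf { r : ℝ | ∃ δ : List (Edit α), applyScript δ F = G ∧ scriptCost c δ F = r }

/-- The generalized tree edit distance `d_c(x̄, ȳ)` between two trees. -/
noncomputable def ted {α : Type} (c : Cost α) (x y : PTree α) : ℝ := fdist c [x] [y]

mutual
  /-- The 1-indexed pre-order position of the rightmost leaf within a tree. -/
  def rlIdx {α : Type} : PTree α → ℕ
    | .node _ cs => rlGo 1 cs
  /-- Helper: the pre-order position of the rightmost leaf of the last tree of a
  forest, where `acc` pre-order positions precede the forest. -/
  def rlGo {α : Type} : ℕ → List (PTree α) → ℕ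
    | acc, [] => acc
    | acc, [t] => acc + rlIdx t
    | acc, t :: ts => rlGo (acc + size t) ts
end

/-- The outermost right leaf `rl_X(i)`: the pre-order index of the rightmost leaf
of the subtree `x̄_i`. -/
def rlAt {α : Type} (F : Forest α) (i : ℕ) : ℕ :=
  match treeAt F i with
  | some t => i + rlIdx t - 1
  | none => i

/-- Helper for the subforest extraction: keeps the nodes with pre-order indices
between `i` and `j` (preserving ancestral structure); `k` is the pre-order index
of the last node already visited. -/
def subAux {α : Type} : Forest α → ℕ → ℕ → ℕ → Forest α × ℕ
  | [], _, _, k => ([], k)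
  | PTree.node a cs :: ts, i, j, k =>
    if k + 1 > j then ([], k + 1)
    else if k + 1 ≥ i then
      let P := subAux cs i j (k + 1)
      let Q := subAux ts i j P.2
      (PTree.node a P.1 :: Q.1, Q.2)
    else
      let P := subAux cs i j (k + 1)
      let Q := subAux ts i j P.2
      (P.1 ++ Q.1, Q.2)
  termination_by F _ _ _ => sizeOf F

/-- The subforest `X[i, j]`: the restriction of `X` to the nodes with pre-order
indices `i, …, j`, preserving the ancestral structure among them. -/
def subforest {α : Type} (F : Forest α) (i j : ℕ) : Forest α := (subAux F i j 0).1

/-!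
Both sides are governed by the recursion `dp` on the leftmost roots: delete the first root of
the left forest, insert the first root of the right forest, or match the two roots and recurse
separately on their children and on the remaining trees. Each branch is realised by edit
scripts (deleting or inserting a root, relabelling a root and then editing inside its children
and behind it), so `fdist ≤ dp`. Conversely, for a non-negative, self-equal cost obeying the
triangle inequality, a single edit lowers `dp` by at most its cost, so `dp` bounds the cost of
every script from below, and `fdist = dp`. Finally `X[i, rl_X(i)]` is the one-tree forest
`[x̄_i]` and `X[i+1, rl_X(i)]` its children, on which `dp` unfolds to the claimed recurrence.
-/

section Preorder

variable {α : Type}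

theorem size_node (a : α) (cs : Forest α) : size (node a cs) = 1 + sizeL cs := by
  rw [size]

@[simp] theorem sizeL_nil : sizeL ([] : Forest α) = 0 := by rw [sizeL]

@[simp] theorem sizeL_cons (t : PTree α) (ts : Forest α) :
    sizeL (t :: ts) = size t + sizeL ts := by
  rw [sizeL]

theorem size_pos (t : PTree α) : 1 ≤ size t := by
  cases t; rw [size_node]; omega

@[simp] theorem sizeL_append (X Y : Forest α) : sizeL (X ++ Y) = sizeL X + sizeL Y := by
  induction X with
  | nil => simp
  | cons t ts ih => simp only [List.cons_append, sizeL_cons, ih]; ring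

theorem subtreesL_cons (t : PTree α) (ts : Forest α) :
    subtreesL (t :: ts) = subtreesT t ++ subtreesL ts := by
  rw [subtreesL]

theorem subtreesT_node (a : α) (cs : Forest α) :
    subtreesT (node a cs) = node a cs :: subtreesL cs := by
  rw [subtreesT]

theorem subtreesL_node_cons (a : α) (cs ts : Forest α) :
    subtreesL (node a cs :: ts) = node a cs :: (subtreesL cs ++ subtreesL ts) := by
  rw [subtreesL_cons, subtreesT_node, List.cons_append]

theorem subtreesL_append (X Y : Forest α) :
    subtreesL (X ++ Y) = subtreesL X ++ subtreesL Y := by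
  induction X with
  | nil => simp [subtreesL]
  | cons t ts ih => simp only [List.cons_append, subtreesL_cons, ih, List.append_assoc]

theorem length_subtreesL : ∀ F : Forest α, (subtreesL F).length = sizeL F
  | [] => by simp [subtreesL]
  | node a cs :: ts => by
      rw [subtreesL_node_cons, sizeL_cons, size_node, List.length_cons, List.length_append,
        length_subtreesL cs, length_subtreesL ts]
      omega

theorem treeAt_node_cons_succ (a : α) (cs F : Forest α) {k : ℕ} (hk : 1 ≤ k)
    (hk' : k ≤ sizeL cs) : treeAt (node a cs :: F) (k + 1) = treeAt cs k := by
  obtain ⟨k, rfl⟩ : ∃ k', k = k' + 1 := ⟨k - 1, by omega⟩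
  simp only [treeAt, preorder, subtreesL_node_cons, Nat.add_sub_cancel,
    List.getElem?_cons_succ]
  exact List.getElem?_append_left (by rw [length_subtreesL]; omega)

theorem treeAt_append_left (X Y : Forest α) {k : ℕ} (hk : 1 ≤ k) (hk' : k ≤ sizeL X) :
    treeAt (X ++ Y) k = treeAt X k := by
  simp only [treeAt, preorder, subtreesL_append]
  exact List.getElem?_append_left (by rw [length_subtreesL]; omega)

theorem treeAt_append_right (X Y : Forest α) {k : ℕ} (hk : 1 ≤ k) :
    treeAt (X ++ Y) (k + sizeL X) = treeAt Y k := by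
  simp only [treeAt, preorder, subtreesL_append]
  rw [List.getElem?_append_right (by rw [length_subtreesL]; omega), length_subtreesL]
  congr 1
  omega

theorem treeAt_cons_add_size (t : PTree α) (F : Forest α) {k : ℕ} (hk : 1 ≤ k) :
    treeAt (t :: F) (k + size t) = treeAt F k := by
  simpa using treeAt_append_right [t] F hk

theorem treeAt_node_cons_one (a : α) (cs F : Forest α) :
    treeAt (node a cs :: F) 1 = some (node a cs) := by
  simp [treeAt, preorder, subtreesL_node_cons]

theorem labelAt_node_cons_one (a : α) (cs F : Forest α) :
    labelAt (node a cs :: F) 1 = some a := by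
  simp [labelAt, treeAt_node_cons_one, label]

theorem labelAt_node_cons_succ (a : α) (cs F : Forest α) {k : ℕ} (hk : 1 ≤ k)
    (hk' : k ≤ sizeL cs) : labelAt (node a cs :: F) (k + 1) = labelAt cs k := by
  rw [labelAt, labelAt, treeAt_node_cons_succ a cs F hk hk']

theorem labelAt_append_left (X Y : Forest α) {k : ℕ} (hk : 1 ≤ k) (hk' : k ≤ sizeL X) :
    labelAt (X ++ Y) k = labelAt X k := by
  rw [labelAt, labelAt, treeAt_append_left X Y hk hk']

theorem labelAt_append_right (X Y : Forest α) {k : ℕ} (hk : 1 ≤ k) :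
    labelAt (X ++ Y) (k + sizeL X) = labelAt Y k := by
  rw [labelAt, labelAt, treeAt_append_right X Y hk]

theorem labelAt_cons_add_size (t : PTree α) (F : Forest α) {k : ℕ} (hk : 1 ≤ k) :
    labelAt (t :: F) (k + size t) = labelAt F k := by
  rw [labelAt, labelAt, treeAt_cons_add_size t F hk]

theorem index_cases (a : α) (cs : Forest α) (i : ℕ) :
    i = 0 ∨ i = 1 ∨ (∃ k, 1 ≤ k ∧ k ≤ sizeL cs ∧ i = k + 1) ∨
      ∃ k, 1 ≤ k ∧ i = k + size (node a cs) := by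
  rw [size_node]
  rcases Nat.lt_or_ge (sizeL cs + 1) i with h | h
  · exact Or.inr <| Or.inr <| Or.inr ⟨i - (1 + sizeL cs), by omega, by omega⟩
  · rcases Nat.lt_or_ge i 2 with h' | h'
    · omega
    · exact Or.inr <| Or.inr <| Or.inl ⟨i - 1, by omega, by omega, by omega⟩

end Preorder

section Edits

variable {α : Type}

@[simp] theorem applyDel_nil (i : ℕ) : applyDel i ([] : Forest α) = [] := by rw [applyDel]

@[simp] theorem applyRep_nil (y : α) (i : ℕ) : applyRep y i ([] : Forest α) = [] := by
  rw [applyRep]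

theorem applyDel_node_cons (i : ℕ) (a : α) (cs ts : Forest α) :
    applyDel i (node a cs :: ts) =
      if i < 1 then node a cs :: ts
      else if i = 1 then delRoot (node a cs :: ts)
      else if i ≤ size (node a cs) then node a (applyDel (i - 1) cs) :: ts
      else node a cs :: applyDel (i - size (node a cs)) ts := by
  rw [applyDel]

theorem applyRep_node_cons (y : α) (i : ℕ) (a : α) (cs ts : Forest α) :
    applyRep y i (node a cs :: ts) =
      if i < 1 then node a cs :: ts
      else if i = 1 then repRoot y (node a cs :: ts)
      else if i ≤ size (node a cs) then node a (applyRep y (i - 1) cs) :: ts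
      else node a cs :: applyRep y (i - size (node a cs)) ts := by
  rw [applyRep]

theorem applyIns_zero (y : α) (l r : ℕ) (F : Forest α) :
    applyIns y l r 0 F = insRoot y l r F := by
  rw [applyIns]

theorem applyIns_succ_nil (y : α) (l r i : ℕ) : applyIns y l r (i + 1) ([] : Forest α) = [] := by
  rw [applyIns]

theorem applyIns_node_cons (y : α) (l r i : ℕ) (a : α) (cs ts : Forest α) :
    applyIns y l r (i + 1) (node a cs :: ts) =
      if i + 1 ≤ size (node a cs) then node a (applyIns y l r i cs) :: ts
      else node a cs :: applyIns y l r (i + 1 - size (node a cs)) ts := by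
  rw [applyIns]

theorem applyDel_zero (F : Forest α) : applyDel 0 F = F := by
  rcases F with _ | ⟨⟨a, cs⟩, ts⟩
  · exact applyDel_nil 0
  · rw [applyDel_node_cons, if_pos Nat.zero_lt_one]

theorem applyRep_zero (y : α) (F : Forest α) : applyRep y 0 F = F := by
  rcases F with _ | ⟨⟨a, cs⟩, ts⟩
  · exact applyRep_nil y 0
  · rw [applyRep_node_cons, if_pos Nat.zero_lt_one]

theorem applyDel_one (a : α) (cs ts : Forest α) :
    applyDel 1 (node a cs :: ts) = cs ++ ts := by
  rw [applyDel_node_cons, if_neg (by omega), if_pos rfl, delRoot]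

theorem applyRep_one (y a : α) (cs ts : Forest α) :
    applyRep y 1 (node a cs :: ts) = node y cs :: ts := by
  rw [applyRep_node_cons, if_neg (by omega), if_pos rfl, repRoot]

theorem applyDel_node_cons_succ (a : α) (cs ts : Forest α) {k : ℕ} (hk : 1 ≤ k)
    (hk' : k ≤ sizeL cs) :
    applyDel (k + 1) (node a cs :: ts) = node a (applyDel k cs) :: ts := by
  rw [applyDel_node_cons, if_neg (by omega), if_neg (by omega),
    if_pos (by rw [size_node]; omega), Nat.add_sub_cancel]

theorem applyRep_node_cons_succ (y a : α) (cs ts : Forest α) {k : ℕ} (hk : 1 ≤ k)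
    (hk' : k ≤ sizeL cs) :
    applyRep y (k + 1) (node a cs :: ts) = node a (applyRep y k cs) :: ts := by
  rw [applyRep_node_cons, if_neg (by omega), if_neg (by omega),
    if_pos (by rw [size_node]; omega), Nat.add_sub_cancel]

theorem applyIns_node_cons_succ (y : α) (l r : ℕ) (a : α) (cs ts : Forest α) {k : ℕ}
    (hk : k ≤ sizeL cs) :
    applyIns y l r (k + 1) (node a cs :: ts) = node a (applyIns y l r k cs) :: ts := by
  rw [applyIns_node_cons, if_pos (by rw [size_node]; omega)]

theorem applyDel_cons_add_size (t : PTree α) (ts : Forest α) {k : ℕ} (hk : 1 ≤ k) :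
    applyDel (k + size t) (t :: ts) = t :: applyDel k ts := by
  obtain ⟨a, cs⟩ := t
  rw [applyDel_node_cons, if_neg (by omega), if_neg (by rw [size_node]; omega),
    if_neg (by omega), Nat.add_sub_cancel]

theorem applyRep_cons_add_size (y : α) (t : PTree α) (ts : Forest α) {k : ℕ} (hk : 1 ≤ k) :
    applyRep y (k + size t) (t :: ts) = t :: applyRep y k ts := by
  obtain ⟨a, cs⟩ := t
  rw [applyRep_node_cons, if_neg (by omega), if_neg (by rw [size_node]; omega),
    if_neg (by omega), Nat.add_sub_cancel]

theorem applyIns_cons_add_size (y : α) (l r : ℕ) (t : PTree α) (ts : Forest α) {k : ℕ}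
    (hk : 1 ≤ k) : applyIns y l r (k + size t) (t :: ts) = t :: applyIns y l r k ts := by
  obtain ⟨a, cs⟩ := t
  obtain ⟨k, rfl⟩ : ∃ k', k = k' + 1 := ⟨k - 1, by omega⟩
  rw [show k + 1 + size (node a cs) = k + size (node a cs) + 1 by omega, applyIns_node_cons,
    if_neg (by omega), show k + size (node a cs) + 1 - size (node a cs) = k + 1 by omega]

theorem applyDel_append_right (X Y : Forest α) {k : ℕ} (hk : 1 ≤ k) :
    applyDel (k + sizeL X) (X ++ Y) = X ++ applyDel k Y := by
  induction X with
  | nil => simp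
  | cons t X ih =>
    rw [sizeL_cons, List.cons_append, ← Nat.add_assoc, Nat.add_right_comm,
      applyDel_cons_add_size t _ (by omega), ih, List.cons_append]

theorem applyRep_append_right (y : α) (X Y : Forest α) {k : ℕ} (hk : 1 ≤ k) :
    applyRep y (k + sizeL X) (X ++ Y) = X ++ applyRep y k Y := by
  induction X with
  | nil => simp
  | cons t X ih =>
    rw [sizeL_cons, List.cons_append, ← Nat.add_assoc, Nat.add_right_comm,
      applyRep_cons_add_size y t _ (by omega), ih, List.cons_append]

theorem applyDel_append_left : ∀ (X Y : Forest α) {k : ℕ}, 1 ≤ k → k ≤ sizeL X →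
    applyDel k (X ++ Y) = applyDel k X ++ Y
  | [], _, _, _, hk' => by simp at hk'; omega
  | node a cs :: X, Y, k, hk, hk' => by
    rw [List.cons_append]
    obtain rfl | rfl | ⟨k, hk1, hk2, rfl⟩ | ⟨k, hk1, rfl⟩ := index_cases a cs k
    · omega
    · rw [applyDel_one, applyDel_one, List.append_assoc]
    · rw [applyDel_node_cons_succ a cs _ hk1 hk2, applyDel_node_cons_succ a cs _ hk1 hk2,
        List.cons_append]
    · rw [sizeL_cons, Nat.add_comm] at hk'
      rw [applyDel_cons_add_size _ _ hk1, applyDel_cons_add_size _ _ hk1,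
        applyDel_append_left X Y hk1 (by omega), List.cons_append]

theorem applyRep_append_left (y : α) : ∀ (X Y : Forest α) {k : ℕ}, 1 ≤ k → k ≤ sizeL X →
    applyRep y k (X ++ Y) = applyRep y k X ++ Y
  | [], _, _, _, hk' => by simp at hk'; omega
  | node a cs :: X, Y, k, hk, hk' => by
    rw [List.cons_append]
    obtain rfl | rfl | ⟨k, hk1, hk2, rfl⟩ | ⟨k, hk1, rfl⟩ := index_cases a cs k
    · omega
    · rw [applyRep_one, applyRep_one, List.cons_append]
    · rw [applyRep_node_cons_succ y a cs _ hk1 hk2, applyRep_node_cons_succ y a cs _ hk1 hk2,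
        List.cons_append]
    · rw [sizeL_cons, Nat.add_comm] at hk'
      rw [applyRep_cons_add_size y _ _ hk1, applyRep_cons_add_size y _ _ hk1,
        applyRep_append_left y X Y hk1 (by omega), List.cons_append]

theorem applyDel_eq_self_of_sizeL_lt : ∀ (F : Forest α) {i : ℕ}, sizeL F < i → applyDel i F = F
  | [], i, _ => applyDel_nil i
  | node a cs :: ts, i, h => by
    rw [sizeL_cons] at h
    obtain ⟨k, rfl⟩ : ∃ k, i = k + size (node a cs) := ⟨i - size (node a cs), by omega⟩
    rw [applyDel_cons_add_size _ _ (by omega), applyDel_eq_self_of_sizeL_lt ts (by omega)]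

theorem applyRep_eq_self_of_sizeL_lt (y : α) :
    ∀ (F : Forest α) {i : ℕ}, sizeL F < i → applyRep y i F = F
  | [], i, _ => applyRep_nil y i
  | node a cs :: ts, i, h => by
    rw [sizeL_cons] at h
    obtain ⟨k, rfl⟩ : ∃ k, i = k + size (node a cs) := ⟨i - size (node a cs), by omega⟩
    rw [applyRep_cons_add_size y _ _ (by omega), applyRep_eq_self_of_sizeL_lt y ts (by omega)]

theorem applyIns_eq_self_of_sizeL_lt (y : α) (l r : ℕ) :
    ∀ (F : Forest α) {i : ℕ}, sizeL F < i → applyIns y l r i F = F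
  | [], i + 1, _ => applyIns_succ_nil y l r i
  | node a cs :: ts, i, h => by
    rw [sizeL_cons] at h
    obtain ⟨k, rfl⟩ : ∃ k, i = k + size (node a cs) := ⟨i - size (node a cs), by omega⟩
    rw [applyIns_cons_add_size y l r _ _ (by omega),
      applyIns_eq_self_of_sizeL_lt y l r ts (by omega)]

theorem index_mem_of_applyDel_ne {i : ℕ} {F : Forest α} (h : applyDel i F ≠ F) :
    1 ≤ i ∧ i ≤ sizeL F := by
  refine ⟨Nat.one_le_iff_ne_zero.2 ?_, not_lt.1 ?_⟩
  · rintro rfl; exact h (applyDel_zero F)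
  · exact fun h' => h (applyDel_eq_self_of_sizeL_lt F h')

theorem index_mem_of_applyRep_ne {y : α} {i : ℕ} {F : Forest α} (h : applyRep y i F ≠ F) :
    1 ≤ i ∧ i ≤ sizeL F := by
  refine ⟨Nat.one_le_iff_ne_zero.2 ?_, not_lt.1 ?_⟩
  · rintro rfl; exact h (applyRep_zero y F)
  · exact fun h' => h (applyRep_eq_self_of_sizeL_lt y F h')

theorem index_le_of_applyIns_ne {y : α} {l r i : ℕ} {F : Forest α}
    (h : applyIns y l r i F ≠ F) : i ≤ sizeL F :=
  not_lt.1 fun h' => h (applyIns_eq_self_of_sizeL_lt y l r F h')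

end Edits

section Scripts

variable {α : Type} {c : Cost α}

theorem applyScript_cons (e : Edit α) (δ : List (Edit α)) (F : Forest α) :
    applyScript (e :: δ) F = applyScript δ (e.apply F) := rfl

theorem applyScript_append (δ₁ δ₂ : List (Edit α)) (F : Forest α) :
    applyScript (δ₁ ++ δ₂) F = applyScript δ₂ (applyScript δ₁ F) := by
  simp [applyScript, List.foldl_append]

theorem scriptCost_cons (e : Edit α) (δ : List (Edit α)) (F : Forest α) :
    scriptCost c (e :: δ) F = editCost c e F + scriptCost c δ (e.apply F) := by
  rw [scriptCost]

theorem scriptCost_append :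
    ∀ (δ₁ δ₂ : List (Edit α)) (F : Forest α),
      scriptCost c (δ₁ ++ δ₂) F = scriptCost c δ₁ F + scriptCost c δ₂ (applyScript δ₁ F)
  | [], δ₂, F => by simp [scriptCost, applyScript]
  | e :: δ₁, δ₂, F => by
    rw [List.cons_append, scriptCost_cons, scriptCost_cons, scriptCost_append δ₁ δ₂,
      applyScript_cons, add_assoc]

theorem editCost_of_apply_eq {e : Edit α} {F : Forest α} (h : e.apply F = F) :
    editCost c e F = 0 := by
  unfold editCost
  rw [if_pos h]

theorem editCost_del {i : ℕ} {F : Forest α} (h : applyDel i F ≠ F) :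
    editCost c (.del i) F = c (labelAt F i) none := by
  unfold editCost
  exact if_neg h

theorem editCost_rep {y : α} {i : ℕ} {F : Forest α} (h : applyRep y i F ≠ F) :
    editCost c (.rep i y) F = c (labelAt F i) (some y) := by
  unfold editCost
  exact if_neg h

theorem editCost_ins {y : α} {i l r : ℕ} {F : Forest α} (h : applyIns y l r i F ≠ F) :
    editCost c (.ins i y l r) F = c none (some y) := by
  unfold editCost
  exact if_neg h

theorem editCost_nonneg (hnn : Nonneg c) (e : Edit α) (F : Forest α) : 0 ≤ editCost c e F := by
  unfold editCost
  split_ifs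
  · exact le_rfl
  · cases e <;> exact hnn _ _

theorem scriptCost_nonneg (hnn : Nonneg c) :
    ∀ (δ : List (Edit α)) (F : Forest α), 0 ≤ scriptCost c δ F
  | [], _ => by rw [scriptCost]
  | e :: δ, F => by
    rw [scriptCost_cons]
    exact add_nonneg (editCost_nonneg hnn e F) (scriptCost_nonneg hnn δ _)

theorem insRoot_one_length_succ (y : α) (cs Z : Forest α) :
    insRoot y 1 (cs.length + 1) (cs ++ Z) = node y cs :: Z := by
  unfold insRoot
  rw [if_neg (by simp)]
  split_ifs with h
  · simp_all
  · simp [List.take_left', List.drop_left']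

theorem exists_applyScript_eq_nil : ∀ F : Forest α, ∃ δ : List (Edit α), applyScript δ F = []
  | [] => ⟨[], rfl⟩
  | node a cs :: ts => by
    obtain ⟨δ, hδ⟩ := exists_applyScript_eq_nil (cs ++ ts)
    exact ⟨.del 1 :: δ, by rw [applyScript_cons, Edit.apply, applyDel_one, hδ]⟩
termination_by F => sizeL F
decreasing_by simp [size_node]

theorem exists_applyScript_eq_append :
    ∀ G F : Forest α, ∃ δ : List (Edit α), applyScript δ F = G ++ F
  | [], _ => ⟨[], rfl⟩
  | node a cs :: ts, F => by
    obtain ⟨δ₁, h₁⟩ := exists_applyScript_eq_append ts F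
    obtain ⟨δ₂, h₂⟩ := exists_applyScript_eq_append cs (ts ++ F)
    refine ⟨δ₁ ++ δ₂ ++ [.ins 0 a 1 (cs.length + 1)], ?_⟩
    rw [applyScript_append, applyScript_append, h₁, h₂, applyScript_cons, Edit.apply,
      applyIns_zero, insRoot_one_length_succ]
    rfl
termination_by G => sizeL G
decreasing_by all_goals simp only [sizeL_cons, size_node]; omega

theorem exists_applyScript_eq (F G : Forest α) : ∃ δ : List (Edit α), applyScript δ F = G := by
  obtain ⟨δ₁, h₁⟩ := exists_applyScript_eq_nil F
  obtain ⟨δ₂, h₂⟩ := exists_applyScript_eq_append G []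
  exact ⟨δ₁ ++ δ₂, by rw [applyScript_append, h₁, h₂, List.append_nil]⟩

theorem fdist_le_scriptCost (hnn : Nonneg c) {F G : Forest α} (δ : List (Edit α))
    (h : applyScript δ F = G) : fdist c F G ≤ scriptCost c δ F :=
  csInf_le ⟨0, by rintro r ⟨δ, -, rfl⟩; exact scriptCost_nonneg hnn δ F⟩ ⟨δ, h, rfl⟩

theorem le_fdist {F G : Forest α} {r : ℝ}
    (h : ∀ δ : List (Edit α), applyScript δ F = G → r ≤ scriptCost c δ F) :
    r ≤ fdist c F G := by
  obtain ⟨δ, hδ⟩ := exists_applyScript_eq F G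
  refine le_csInf ⟨_, δ, hδ, rfl⟩ ?_
  rintro _ ⟨δ, hδ, rfl⟩
  exact h δ hδ

theorem fdist_self_le (hnn : Nonneg c) (F : Forest α) : fdist c F F ≤ 0 := by
  simpa [scriptCost] using fdist_le_scriptCost hnn (c := c) [] (F := F) (G := F) rfl

theorem fdist_apply_le (hnn : Nonneg c) (e : Edit α) (F : Forest α) :
    fdist c F (e.apply F) ≤ editCost c e F := by
  simpa [scriptCost] using fdist_le_scriptCost hnn (c := c) [e] (F := F) (G := e.apply F) rfl

theorem fdist_triangle (hnn : Nonneg c) (F G H : Forest α) :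
    fdist c F H ≤ fdist c F G + fdist c G H := by
  suffices ∀ δ₁ : List (Edit α), applyScript δ₁ F = G →
      fdist c F H - scriptCost c δ₁ F ≤ fdist c G H by
    linarith [le_fdist (c := c) (r := fdist c F H - fdist c G H)
      fun δ₁ h₁ => by linarith [this δ₁ h₁]]
  intro δ₁ h₁
  refine le_fdist fun δ₂ h₂ => ?_
  have := fdist_le_scriptCost hnn (δ₁ ++ δ₂) (by rw [applyScript_append, h₁, h₂])
  rw [scriptCost_append, h₁] at this
  linarith

theorem fdist_map_le (hnn : Nonneg c) (φ : Forest α → Forest α)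
    (hφ : ∀ (e : Edit α) (X : Forest α), e.apply X ≠ X →
      ∃ e' : Edit α, e'.apply (φ X) = φ (e.apply X) ∧ editCost c e' (φ X) = editCost c e X)
    (X Y : Forest α) : fdist c (φ X) (φ Y) ≤ fdist c X Y := by
  refine le_fdist fun δ hδ => ?_
  subst hδ
  induction δ generalizing X with
  | nil => exact fdist_self_le hnn _
  | cons e δ ih =>
    rw [applyScript_cons, scriptCost_cons]
    by_cases he : e.apply X = X
    · rw [he, editCost_of_apply_eq he, zero_add]
      exact ih X
    · obtain ⟨e', happly, hcost⟩ := hφ e X he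
      calc fdist c (φ X) (φ (applyScript δ (e.apply X)))
          ≤ fdist c (φ X) (φ (e.apply X)) + fdist c (φ (e.apply X)) (φ (applyScript δ (e.apply X))) :=
            fdist_triangle hnn _ _ _
        _ ≤ editCost c e X + scriptCost c δ (e.apply X) := by
            gcongr
            · exact happly ▸ hcost ▸ fdist_apply_le hnn e' (φ X)
            · exact ih _

end Scripts

section Transport

variable {α : Type} {c : Cost α}

theorem insRoot_cons (y : α) (t : PTree α) (F : Forest α) {l r : ℕ} (h : insRoot y l r F ≠ F) :
    insRoot y (l + 1) (r + 1) (t :: F) = t :: insRoot y l r F := by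
  have hlr : ¬(r > F.length + 1 ∨ l > r ∨ l < 1) := fun hlr => h (by rw [insRoot, if_pos hlr])
  obtain ⟨l, rfl⟩ : ∃ l', l = l' + 1 := ⟨l - 1, by omega⟩
  obtain ⟨r, rfl⟩ : ∃ r', r = r' + 1 := ⟨r - 1, by omega⟩
  unfold insRoot
  rw [if_neg hlr, if_neg (by simp; omega)]
  split_ifs <;> simp_all

theorem exists_edit_apply_node_cons (a : α) (F : Forest α) (e : Edit α) (cs : Forest α)
    (h : e.apply cs ≠ cs) : ∃ e' : Edit α,
      e'.apply (node a cs :: F) = node a (e.apply cs) :: F ∧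
      editCost c e' (node a cs :: F) = editCost c e cs := by
  have hne : ∀ e' : Edit α, e'.apply (node a cs :: F) = node a (e.apply cs) :: F →
      e'.apply (node a cs :: F) ≠ node a cs :: F := fun e' he' => by simpa [he'] using h
  cases e with
  | del i =>
    obtain ⟨hi, hi'⟩ := index_mem_of_applyDel_ne h
    have happ := applyDel_node_cons_succ a cs F hi hi'
    refine ⟨.del (i + 1), happ, ?_⟩
    rw [editCost_del (hne (.del (i + 1)) happ), editCost_del h, labelAt_node_cons_succ a cs F hi hi']
  | rep i y =>
    obtain ⟨hi, hi'⟩ := index_mem_of_applyRep_ne h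
    have happ := applyRep_node_cons_succ y a cs F hi hi'
    refine ⟨.rep (i + 1) y, happ, ?_⟩
    rw [editCost_rep (hne (.rep (i + 1) y) happ), editCost_rep h,
      labelAt_node_cons_succ a cs F hi hi']
  | ins i y l r =>
    have happ := applyIns_node_cons_succ y l r a cs F (index_le_of_applyIns_ne h)
    refine ⟨.ins (i + 1) y l r, happ, ?_⟩
    rw [editCost_ins (hne (.ins (i + 1) y l r) happ), editCost_ins h]

theorem exists_edit_apply_cons (t : PTree α) (e : Edit α) (F : Forest α)
    (h : e.apply F ≠ F) : ∃ e' : Edit α,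
      e'.apply (t :: F) = t :: e.apply F ∧ editCost c e' (t :: F) = editCost c e F := by
  have hne : ∀ e' : Edit α, e'.apply (t :: F) = t :: e.apply F →
      e'.apply (t :: F) ≠ t :: F := fun e' he' => by simpa [he'] using h
  cases e with
  | del i =>
    have hi := (index_mem_of_applyDel_ne h).1
    have happ := applyDel_cons_add_size t F hi
    refine ⟨.del (i + size t), happ, ?_⟩
    rw [editCost_del (hne (.del (i + size t)) happ), editCost_del h, labelAt_cons_add_size t F hi]
  | rep i y =>
    have hi := (index_mem_of_applyRep_ne h).1
    have happ := applyRep_cons_add_size y t F hi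
    refine ⟨.rep (i + size t) y, happ, ?_⟩
    rw [editCost_rep (hne (.rep (i + size t) y) happ), editCost_rep h,
      labelAt_cons_add_size t F hi]
  | ins i y l r =>
    cases i with
    | zero =>
      have happ : (Edit.ins 0 y (l + 1) (r + 1)).apply (t :: F) = t :: applyIns y l r 0 F := by
        simp only [Edit.apply, applyIns_zero] at h ⊢
        exact insRoot_cons y t F h
      exact ⟨.ins 0 y (l + 1) (r + 1), happ, by rw [editCost_ins (hne _ happ), editCost_ins h]⟩
    | succ i =>
      have happ : (Edit.ins (i + 1 + size t) y l r).apply (t :: F) =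
          t :: applyIns y l r (i + 1) F :=
        applyIns_cons_add_size y l r t F (k := i + 1) (by omega)
      exact ⟨_, happ, by rw [editCost_ins (hne _ happ), editCost_ins h]⟩

theorem fdist_node_cons_le (hnn : Nonneg c) (a : α) (cs cs' F : Forest α) :
    fdist c (node a cs :: F) (node a cs' :: F) ≤ fdist c cs cs' :=
  fdist_map_le hnn (fun X => node a X :: F) (fun e X h => exists_edit_apply_node_cons a F e X h)
    cs cs'

theorem fdist_cons_le (hnn : Nonneg c) (t : PTree α) (F F' : Forest α) :
    fdist c (t :: F) (t :: F') ≤ fdist c F F' :=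
  fdist_map_le hnn (t :: ·) (exists_edit_apply_cons t) F F'

theorem fdist_le_del (hnn : Nonneg c) (a : α) (cs F G : Forest α) :
    fdist c (node a cs :: F) G ≤ c (some a) none + fdist c (cs ++ F) G := by
  have happ : (Edit.del 1).apply (node a cs :: F) = cs ++ F := applyDel_one a cs F
  have hcost : editCost c (.del 1) (node a cs :: F) = c (some a) none := by
    rw [editCost_del (by rw [← Edit.apply, happ]; intro h; simpa [size_node] using congrArg sizeL h),
      labelAt_node_cons_one]
  calc fdist c (node a cs :: F) G ≤ fdist c (node a cs :: F) (cs ++ F) + fdist c (cs ++ F) G :=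
        fdist_triangle hnn _ _ _
    _ ≤ c (some a) none + fdist c (cs ++ F) G := by
        rw [← happ, ← hcost]; gcongr; exact fdist_apply_le hnn _ _

theorem fdist_le_ins (hnn : Nonneg c) (b : α) (ds F G : Forest α) :
    fdist c F (node b ds :: G) ≤ c none (some b) + fdist c F (ds ++ G) := by
  have happ : (Edit.ins 0 b 1 (ds.length + 1)).apply (ds ++ G) = node b ds :: G := by
    rw [Edit.apply, applyIns_zero, insRoot_one_length_succ]
  have hcost : editCost c (.ins 0 b 1 (ds.length + 1)) (ds ++ G) = c none (some b) := by
    rw [editCost_ins (by rw [← Edit.apply, happ]; intro h; simpa [size_node] using congrArg sizeL h)]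
  calc fdist c F (node b ds :: G) ≤ fdist c F (ds ++ G) + fdist c (ds ++ G) (node b ds :: G) :=
        fdist_triangle hnn _ _ _
    _ ≤ c none (some b) + fdist c F (ds ++ G) := by
        rw [add_comm, ← happ, ← hcost]; gcongr; exact fdist_apply_le hnn _ _

theorem fdist_le_match (hnn : Nonneg c) (hse : SelfEq c) (a b : α) (cs ds F G : Forest α) :
    fdist c (node a cs :: F) (node b ds :: G) ≤
      c (some a) (some b) + fdist c cs ds + fdist c F G := by
  have happ : (Edit.rep 1 b).apply (node a cs :: F) = node b cs :: F := applyRep_one b a cs F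
  have hcost : editCost c (.rep 1 b) (node a cs :: F) = c (some a) (some b) := by
    by_cases h : (Edit.rep 1 b).apply (node a cs :: F) = node a cs :: F
    · rw [happ] at h
      obtain rfl : b = a := by simpa using h
      rw [editCost_of_apply_eq (happ.trans h), hse]
    · rw [editCost_rep h, labelAt_node_cons_one]
  calc fdist c (node a cs :: F) (node b ds :: G)
      ≤ fdist c (node a cs :: F) (node b cs :: F) +
          (fdist c (node b cs :: F) (node b ds :: F) + fdist c (node b ds :: F) (node b ds :: G)) :=
        (fdist_triangle hnn _ _ _).trans (by gcongr; exact fdist_triangle hnn _ _ _)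
    _ ≤ c (some a) (some b) + (fdist c cs ds + fdist c F G) := by
        gcongr
        · rw [← happ, ← hcost]; exact fdist_apply_le hnn _ _
        · exact fdist_node_cons_le hnn b cs ds F
        · exact fdist_cons_le hnn _ F G
    _ = c (some a) (some b) + fdist c cs ds + fdist c F G := by ring

end Transport

section Recurrence

variable {α : Type} {c : Cost α}

variable (c) in
noncomputable def dp : Forest α → Forest α → ℝ
  | [], [] => 0
  | node a cs :: F, [] => c (some a) none + dp (cs ++ F) []
  | [], node b ds :: G => c none (some b) + dp [] (ds ++ G)
  | node a cs :: F, node b ds :: G =>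
      min (c (some a) none + dp (cs ++ F) (node b ds :: G))
        (min (c none (some b) + dp (node a cs :: F) (ds ++ G))
          (c (some a) (some b) + dp cs ds + dp F G))
termination_by F G => sizeL F + sizeL G
decreasing_by all_goals simp only [sizeL_append, sizeL_cons, size_node]; omega

theorem dp_nil_nil : dp c [] [] = 0 := by rw [dp]

theorem dp_node_cons_nil (a : α) (cs F : Forest α) :
    dp c (node a cs :: F) [] = c (some a) none + dp c (cs ++ F) [] := by
  rw [dp]

theorem dp_nil_node_cons (b : α) (ds G : Forest α) :
    dp c [] (node b ds :: G) = c none (some b) + dp c [] (ds ++ G) := by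
  rw [dp]

theorem dp_node_cons_node_cons (a b : α) (cs ds F G : Forest α) :
    dp c (node a cs :: F) (node b ds :: G) =
      min (c (some a) none + dp c (cs ++ F) (node b ds :: G))
        (min (c none (some b) + dp c (node a cs :: F) (ds ++ G))
          (c (some a) (some b) + dp c cs ds + dp c F G)) := by
  rw [dp]

theorem dp_le_del (a : α) (cs F G : Forest α) :
    dp c (node a cs :: F) G ≤ c (some a) none + dp c (cs ++ F) G := by
  rcases G with _ | ⟨⟨b, ds⟩, G⟩
  · exact (dp_node_cons_nil a cs F).le
  · rw [dp_node_cons_node_cons]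
    exact min_le_left _ _

theorem dp_le_ins (b : α) (ds F G : Forest α) :
    dp c F (node b ds :: G) ≤ c none (some b) + dp c F (ds ++ G) := by
  rcases F with _ | ⟨⟨a, cs⟩, F⟩
  · exact (dp_nil_node_cons b ds G).le
  · rw [dp_node_cons_node_cons]
    exact (min_le_right _ _).trans (min_le_left _ _)

theorem dp_le_match (a b : α) (cs ds F G : Forest α) :
    dp c (node a cs :: F) (node b ds :: G) ≤ c (some a) (some b) + dp c cs ds + dp c F G := by
  rw [dp_node_cons_node_cons]
  exact (min_le_right _ _).trans (min_le_right _ _)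

theorem dp_nonneg (hnn : Nonneg c) : ∀ F G : Forest α, 0 ≤ dp c F G
  | [], [] => dp_nil_nil.ge
  | node a cs :: F, [] => by
    rw [dp_node_cons_nil]
    exact add_nonneg (hnn _ _) (dp_nonneg hnn _ _)
  | [], node b ds :: G => by
    rw [dp_nil_node_cons]
    exact add_nonneg (hnn _ _) (dp_nonneg hnn _ _)
  | node a cs :: F, node b ds :: G => by
    have := dp_nonneg hnn cs ds
    have := dp_nonneg hnn F G
    rw [dp_node_cons_node_cons]
    refine le_min ?_ (le_min ?_ ?_)
    · exact add_nonneg (hnn _ _) (dp_nonneg hnn _ _)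
    · exact add_nonneg (hnn _ _) (dp_nonneg hnn _ _)
    · linarith [hnn (some a) (some b)]
termination_by F G => sizeL F + sizeL G
decreasing_by all_goals simp only [sizeL_append, sizeL_cons, size_node]; omega

theorem dp_self (hnn : Nonneg c) (hse : SelfEq c) : ∀ F : Forest α, dp c F F = 0
  | [] => dp_nil_nil
  | node a cs :: F => by
    refine le_antisymm ?_ (dp_nonneg hnn _ _)
    simpa [hse (some a), dp_self hnn hse cs, dp_self hnn hse F] using
      dp_le_match (c := c) a a cs cs F F
termination_by F => sizeL F
decreasing_by all_goals simp only [sizeL_cons, size_node]; omega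

theorem dp_append_le : ∀ A B C D : Forest α, dp c (A ++ B) (C ++ D) ≤ dp c A C + dp c B D
  | [], B, [], D => by simp [dp_nil_nil]
  | [], B, node b ds :: C, D => by
    rw [dp_nil_node_cons]
    have := dp_append_le [] B (ds ++ C) D
    simp only [List.nil_append, List.cons_append, List.append_assoc] at this ⊢
    linarith [dp_le_ins (c := c) b ds B (C ++ D)]
  | node a cs :: A, B, [], D => by
    rw [dp_node_cons_nil]
    have := dp_append_le (cs ++ A) B [] D
    simp only [List.nil_append, List.cons_append, List.append_assoc] at this ⊢
    linarith [dp_le_del (c := c) a cs (A ++ B) D]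
  | node a cs :: A, B, node b ds :: C, D => by
    have hdel := dp_append_le (cs ++ A) B (node b ds :: C) D
    have hins := dp_append_le (node a cs :: A) B (ds ++ C) D
    have hmatch := dp_append_le A B C D
    simp only [List.cons_append, List.append_assoc] at hdel hins ⊢
    rw [dp_node_cons_node_cons a b cs ds A C, ← min_add_add_right, ← min_add_add_right]
    refine le_min ?_ (le_min ?_ ?_)
    · linarith [dp_le_del (c := c) a cs (A ++ B) (node b ds :: (C ++ D))]
    · linarith [dp_le_ins (c := c) b ds (node a cs :: (A ++ B)) (C ++ D)]
    · linarith [dp_le_match (c := c) a b cs ds (A ++ B) (C ++ D)]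
termination_by A B C D => sizeL A + sizeL B + sizeL C + sizeL D
decreasing_by all_goals simp only [sizeL_append, sizeL_cons, size_node]; omega

theorem fdist_le_dp (hnn : Nonneg c) (hse : SelfEq c) : ∀ F G : Forest α, fdist c F G ≤ dp c F G
  | [], [] => by simpa [dp_nil_nil] using fdist_self_le hnn ([] : Forest α)
  | node a cs :: F, [] => by
    rw [dp_node_cons_nil]
    linarith [fdist_le_del hnn a cs F [], fdist_le_dp hnn hse (cs ++ F) []]
  | [], node b ds :: G => by
    rw [dp_nil_node_cons]
    linarith [fdist_le_ins hnn b ds [] G, fdist_le_dp hnn hse [] (ds ++ G)]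
  | node a cs :: F, node b ds :: G => by
    rw [dp_node_cons_node_cons]
    refine le_min ?_ (le_min ?_ ?_)
    · linarith [fdist_le_del hnn a cs F (node b ds :: G),
        fdist_le_dp hnn hse (cs ++ F) (node b ds :: G)]
    · linarith [fdist_le_ins hnn b ds (node a cs :: F) G,
        fdist_le_dp hnn hse (node a cs :: F) (ds ++ G)]
    · linarith [fdist_le_match hnn hse a b cs ds F G, fdist_le_dp hnn hse cs ds,
        fdist_le_dp hnn hse F G]
termination_by F G => sizeL F + sizeL G
decreasing_by all_goals simp only [sizeL_append, sizeL_cons, size_node]; omega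

end Recurrence

section LowerBound

variable {α : Type} {c : Cost α}

/-- Only the deletion and matching branches of the recursion need checking: the insertion
branch follows by induction on `G`. -/
theorem dp_le_add_dp_node_cons {F : Forest α} {k : ℝ} {a : α} {cs F' : Forest α}
    (hdel : ∀ G, dp c F G ≤ k + (c (some a) none + dp c (cs ++ F') G))
    (hmatch : ∀ b ds G,
      dp c F (node b ds :: G) ≤ k + (c (some a) (some b) + dp c cs ds + dp c F' G)) :
    ∀ G, dp c F G ≤ k + dp c (node a cs :: F') G
  | [] => by rw [dp_node_cons_nil]; exact hdel []
  | node b ds :: G => by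
    rw [dp_node_cons_node_cons, ← min_add_add_left, ← min_add_add_left]
    refine le_min (hdel _) (le_min ?_ (hmatch b ds G))
    linarith [dp_le_ins (c := c) b ds F G, dp_le_add_dp_node_cons hdel hmatch (ds ++ G)]
termination_by G => sizeL G
decreasing_by simp only [sizeL_append, sizeL_cons, size_node]; omega

theorem dp_node_cons_le_add {k : ℝ} (a : α) {cs₀ F₀ cs F : Forest α}
    (hdel : ∀ G, dp c (cs₀ ++ F₀) G ≤ k + dp c (cs ++ F) G)
    (hmatch : ∀ G H, dp c cs₀ G + dp c F₀ H ≤ k + (dp c cs G + dp c F H)) (G : Forest α) :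
    dp c (node a cs₀ :: F₀) G ≤ k + dp c (node a cs :: F) G :=
  dp_le_add_dp_node_cons (fun G => by linarith [dp_le_del (c := c) a cs₀ F₀ G, hdel G])
    (fun b ds G => by linarith [dp_le_match (c := c) a b cs₀ ds F₀ G, hmatch ds G]) G

theorem dp_le_applyDel (hnn : Nonneg c) :
    ∀ (F G : Forest α) (i : ℕ), dp c F G ≤ c (labelAt F i) none + dp c (applyDel i F) G
  | [], G, i => by rw [applyDel_nil]; linarith [hnn (labelAt [] i) none]
  | node a cs :: F, G, i => by
    obtain rfl | rfl | ⟨k, hk, hk', rfl⟩ | ⟨k, hk, rfl⟩ := index_cases a cs i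
    · rw [applyDel_zero]; linarith [hnn (labelAt (node a cs :: F) 0) none]
    · rw [applyDel_one, labelAt_node_cons_one]
      exact dp_le_del a cs F G
    · rw [applyDel_node_cons_succ a cs F hk hk', labelAt_node_cons_succ a cs F hk hk']
      refine dp_node_cons_le_add a (fun G => ?_) (fun G H => ?_) G
      · have := dp_le_applyDel hnn (cs ++ F) G k
        rwa [applyDel_append_left cs F hk hk', labelAt_append_left cs F hk hk'] at this
      · linarith [dp_le_applyDel hnn cs G k]
    · rw [applyDel_cons_add_size _ F hk, labelAt_cons_add_size _ F hk]
      refine dp_node_cons_le_add a (fun G => ?_) (fun G H => ?_) G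
      · have := dp_le_applyDel hnn (cs ++ F) G (k + sizeL cs)
        rwa [applyDel_append_right cs F hk, labelAt_append_right cs F hk] at this
      · linarith [dp_le_applyDel hnn F H k]
termination_by F => sizeL F
decreasing_by all_goals simp only [sizeL_append, sizeL_cons, size_node]; omega

theorem dp_le_applyRep (hnn : Nonneg c) (htr : Triangle c) (y : α) :
    ∀ (F G : Forest α) (i : ℕ), dp c F G ≤ c (labelAt F i) (some y) + dp c (applyRep y i F) G
  | [], G, i => by rw [applyRep_nil]; linarith [hnn (labelAt [] i) (some y)]
  | node a cs :: F, G, i => by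
    obtain rfl | rfl | ⟨k, hk, hk', rfl⟩ | ⟨k, hk, rfl⟩ := index_cases a cs i
    · rw [applyRep_zero]; linarith [hnn (labelAt (node a cs :: F) 0) (some y)]
    · rw [applyRep_one, labelAt_node_cons_one]
      refine dp_le_add_dp_node_cons (fun G => ?_) (fun b ds G => ?_) G
      · linarith [dp_le_del (c := c) a cs F G, htr (some a) (some y) none]
      · linarith [dp_le_match (c := c) a b cs ds F G, htr (some a) (some y) (some b)]
    · rw [applyRep_node_cons_succ y a cs F hk hk', labelAt_node_cons_succ a cs F hk hk']
      refine dp_node_cons_le_add a (fun G => ?_) (fun G H => ?_) G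
      · have := dp_le_applyRep hnn htr y (cs ++ F) G k
        rwa [applyRep_append_left y cs F hk hk', labelAt_append_left cs F hk hk'] at this
      · linarith [dp_le_applyRep hnn htr y cs G k]
    · rw [applyRep_cons_add_size y _ F hk, labelAt_cons_add_size _ F hk]
      refine dp_node_cons_le_add a (fun G => ?_) (fun G H => ?_) G
      · have := dp_le_applyRep hnn htr y (cs ++ F) G (k + sizeL cs)
        rwa [applyRep_append_right y cs F hk, labelAt_append_right cs F hk] at this
      · linarith [dp_le_applyRep hnn htr y F H k]
termination_by F => sizeL F
decreasing_by all_goals simp only [sizeL_append, sizeL_cons, size_node]; omega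

/-- The insertion step, stated through the deletion that undoes it
(see `exists_applyDel_applyIns`). -/
theorem dp_applyDel_le (hnn : Nonneg c) (htr : Triangle c) :
    ∀ (H G : Forest α) (j : ℕ), dp c (applyDel j H) G ≤ c none (labelAt H j) + dp c H G
  | [], G, j => by rw [applyDel_nil]; linarith [hnn none (labelAt [] j)]
  | node a cs :: H, G, j => by
    obtain rfl | rfl | ⟨k, hk, hk', rfl⟩ | ⟨k, hk, rfl⟩ := index_cases a cs j
    · rw [applyDel_zero]; linarith [hnn none (labelAt (node a cs :: H) 0)]
    · rw [applyDel_one, labelAt_node_cons_one]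
      refine dp_le_add_dp_node_cons (fun G => ?_) (fun b ds G => ?_) G
      · linarith [hnn none (some a), hnn (some a) none]
      · linarith [dp_le_ins (c := c) b ds (cs ++ H) G, dp_append_le (c := c) cs H ds G,
          htr none (some a) (some b)]
    · rw [applyDel_node_cons_succ a cs H hk hk', labelAt_node_cons_succ a cs H hk hk']
      refine dp_node_cons_le_add a (fun G => ?_) (fun G H' => ?_) G
      · have := dp_applyDel_le hnn htr (cs ++ H) G k
        rwa [applyDel_append_left cs H hk hk', labelAt_append_left cs H hk hk'] at this
      · linarith [dp_applyDel_le hnn htr cs G k]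
    · rw [applyDel_cons_add_size _ H hk, labelAt_cons_add_size _ H hk]
      refine dp_node_cons_le_add a (fun G => ?_) (fun G H' => ?_) G
      · have := dp_applyDel_le hnn htr (cs ++ H) G (k + sizeL cs)
        rwa [applyDel_append_right cs H hk, labelAt_append_right cs H hk] at this
      · linarith [dp_applyDel_le hnn htr H H' k]
termination_by H => sizeL H
decreasing_by all_goals simp only [sizeL_append, sizeL_cons, size_node]; omega

theorem exists_eq_append_of_insRoot_ne {y : α} {l r : ℕ} {F : Forest α}
    (h : insRoot y l r F ≠ F) :
    ∃ X M Z : Forest α, F = X ++ (M ++ Z) ∧ insRoot y l r F = X ++ node y M :: Z := by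
  unfold insRoot at h ⊢
  split_ifs at h ⊢ with hlr hl
  · exact absurd rfl h
  · exact ⟨F.take (l - 1), [], F.drop (l - 1), by simp, by simp⟩
  · have hsplit : (F.drop (l - 1)).take (r - l) ++ F.drop (r - 1) = F.drop (l - 1) := by
      rw [show r - 1 = l - 1 + (r - l) by omega, ← List.drop_drop, List.take_append_drop]
    exact ⟨_, _, _, by rw [hsplit, List.take_append_drop], by simp⟩

theorem exists_applyDel_applyIns (y : α) (l r : ℕ) :
    ∀ (i : ℕ) (F : Forest α), applyIns y l r i F ≠ F →
      ∃ j, applyDel j (applyIns y l r i F) = F ∧ labelAt (applyIns y l r i F) j = some y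
  | 0, F, h => by
    rw [applyIns_zero] at h ⊢
    obtain ⟨X, M, Z, rfl, hins⟩ := exists_eq_append_of_insRoot_ne h
    refine ⟨1 + sizeL X, ?_, ?_⟩
    · rw [hins, applyDel_append_right X _ le_rfl, applyDel_one]
    · rw [hins, labelAt_append_right X _ le_rfl, labelAt_node_cons_one]
  | i + 1, [], h => absurd (applyIns_succ_nil y l r i) h
  | i + 1, node a cs :: ts, h => by
    by_cases hi : i ≤ sizeL cs
    · rw [applyIns_node_cons_succ y l r a cs ts hi] at h ⊢
      have hne : applyIns y l r i cs ≠ cs := by simpa using h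
      obtain ⟨j, hdel, hlab⟩ := exists_applyDel_applyIns y l r i cs hne
      obtain ⟨hj, hj'⟩ := index_mem_of_applyDel_ne (hdel.trans_ne hne.symm)
      exact ⟨j + 1, by rw [applyDel_node_cons_succ a _ ts hj hj', hdel],
        by rw [labelAt_node_cons_succ a _ ts hj hj', hlab]⟩
    · obtain ⟨k, hk, hik⟩ : ∃ k, 1 ≤ k ∧ i + 1 = k + size (node a cs) :=
        ⟨i + 1 - size (node a cs), by rw [size_node]; omega, by rw [size_node]; omega⟩
      rw [hik, applyIns_cons_add_size y l r _ ts hk] at h ⊢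
      have hne : applyIns y l r k ts ≠ ts := by simpa using h
      obtain ⟨j, hdel, hlab⟩ := exists_applyDel_applyIns y l r k ts hne
      obtain ⟨hj, -⟩ := index_mem_of_applyDel_ne (hdel.trans_ne hne.symm)
      exact ⟨j + size (node a cs), by rw [applyDel_cons_add_size _ _ hj, hdel],
        by rw [labelAt_cons_add_size _ _ hj, hlab]⟩
termination_by _ F => sizeL F
decreasing_by all_goals simp only [sizeL_cons, size_node]; omega

theorem dp_le_editCost_add (hnn : Nonneg c) (htr : Triangle c) (e : Edit α) (F G : Forest α) :
    dp c F G ≤ editCost c e F + dp c (e.apply F) G := by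
  by_cases he : e.apply F = F
  · rw [he, editCost_of_apply_eq he, zero_add]
  cases e with
  | del i => rw [editCost_del he]; exact dp_le_applyDel hnn F G i
  | rep i y => rw [editCost_rep he]; exact dp_le_applyRep hnn htr y F G i
  | ins i y l r =>
    obtain ⟨j, hdel, hlab⟩ := exists_applyDel_applyIns y l r i F he
    have := dp_applyDel_le hnn htr (applyIns y l r i F) G j
    rwa [hdel, hlab, ← editCost_ins (c := c) he] at this

theorem dp_le_scriptCost (hnn : Nonneg c) (hse : SelfEq c) (htr : Triangle c)
    (δ : List (Edit α)) (F : Forest α) : dp c F (applyScript δ F) ≤ scriptCost c δ F := by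
  induction δ generalizing F with
  | nil => simp [applyScript, scriptCost, dp_self hnn hse]
  | cons e δ ih =>
    rw [applyScript_cons, scriptCost_cons]
    linarith [dp_le_editCost_add hnn htr e F (applyScript δ (e.apply F)), ih (e.apply F)]

theorem fdist_eq_dp (hnn : Nonneg c) (hse : SelfEq c) (htr : Triangle c) (F G : Forest α) :
    fdist c F G = dp c F G :=
  le_antisymm (fdist_le_dp hnn hse F G)
    (le_fdist fun δ hδ => hδ ▸ dp_le_scriptCost hnn hse htr δ F)

end LowerBound

section Subforest

variable {α : Type}

mutual
theorem rlIdx_eq_size : ∀ t : PTree α, rlIdx t = size t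
  | node a cs => by rw [rlIdx, rlGo_eq cs 1, size_node]

theorem rlGo_eq : ∀ (cs : Forest α) (acc : ℕ), rlGo acc cs = acc + sizeL cs
  | [], acc => by rw [rlGo, sizeL_nil, Nat.add_zero]
  | [t], acc => by rw [rlGo, rlIdx_eq_size t, sizeL_cons, sizeL_nil, Nat.add_zero]
  | t :: t' :: ts, acc => by
    rw [rlGo, rlGo_eq (t' :: ts) (acc + size t), sizeL_cons t, Nat.add_assoc]
    simp
end

theorem rlAt_of_treeAt {F : Forest α} {i : ℕ} {t : PTree α} (h : treeAt F i = some t) :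
    rlAt F i = i + size t - 1 := by
  rw [rlAt, h]
  exact congrArg (i + · - 1) (rlIdx_eq_size t)

@[simp] theorem subAux_nil (i j k : ℕ) : subAux ([] : Forest α) i j k = ([], k) := by
  rw [subAux]

theorem subAux_node_cons (a : α) (cs ts : Forest α) (i j k : ℕ) :
    subAux (node a cs :: ts) i j k =
      if k + 1 > j then ([], k + 1)
      else if k + 1 ≥ i then
        (node a (subAux cs i j (k + 1)).1 :: (subAux ts i j (subAux cs i j (k + 1)).2).1,
          (subAux ts i j (subAux cs i j (k + 1)).2).2)
      else
        ((subAux cs i j (k + 1)).1 ++ (subAux ts i j (subAux cs i j (k + 1)).2).1,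
          (subAux ts i j (subAux cs i j (k + 1)).2).2) := by
  rw [subAux]

theorem subAux_fst_eq_nil_of_le (F : Forest α) {i j k : ℕ} (h : j ≤ k) :
    (subAux F i j k).1 = [] := by
  rcases F with _ | ⟨⟨a, cs⟩, ts⟩
  · simp
  · rw [subAux_node_cons, if_pos (by omega)]

theorem subAux_snd_of_le :
    ∀ (F : Forest α) {i j k : ℕ}, k + sizeL F ≤ j → (subAux F i j k).2 = k + sizeL F
  | [], i, j, k, _ => by simp
  | node a cs :: ts, i, j, k, h => by
    rw [sizeL_cons, size_node] at h
    rw [subAux_node_cons, if_neg (by omega), subAux_snd_of_le cs (by omega),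
      subAux_snd_of_le ts (by omega), sizeL_cons, size_node]
    split_ifs <;> omega

theorem le_subAux_snd :
    ∀ (F : Forest α) {i j k : ℕ}, j ≤ k + sizeL F → j ≤ (subAux F i j k).2
  | [], i, j, k, h => by simpa using h
  | node a cs :: ts, i, j, k, h => by
    rw [sizeL_cons, size_node] at h
    rw [subAux_node_cons]
    have hts : j ≤ (subAux ts i j (subAux cs i j (k + 1)).2).2 := by
      refine le_subAux_snd ts ?_
      by_cases hcs : j ≤ k + 1 + sizeL cs
      · exact (le_subAux_snd cs hcs).trans le_self_add
      · rw [subAux_snd_of_le cs (by omega)]; omega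
    split_ifs
    · simp only; omega
    · exact hts
    · exact hts

theorem subAux_fst_eq_self :
    ∀ (F : Forest α) {i j k : ℕ}, i ≤ k + 1 → k + sizeL F ≤ j → (subAux F i j k).1 = F
  | [], i, j, k, _, _ => by simp
  | node a cs :: ts, i, j, k, hi, hj => by
    rw [sizeL_cons, size_node] at hj
    rw [subAux_node_cons, if_neg (by omega), if_pos (by omega), subAux_fst_eq_self cs (by omega)
      (by omega), subAux_snd_of_le cs (by omega), subAux_fst_eq_self ts (by omega) (by omega)]

theorem subAux_fst_eq_nil_of_lt :
    ∀ (F : Forest α) {i j k : ℕ}, k + sizeL F < i → k + sizeL F ≤ j → (subAux F i j k).1 = []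
  | [], i, j, k, _, _ => by simp
  | node a cs :: ts, i, j, k, hi, hj => by
    rw [sizeL_cons, size_node] at hi hj
    rw [subAux_node_cons, if_neg (by omega), if_neg (by omega),
      subAux_fst_eq_nil_of_lt cs (by omega) (by omega), subAux_snd_of_le cs (by omega),
      subAux_fst_eq_nil_of_lt ts (by omega) (by omega), List.append_nil]

theorem subAux_cons_fst_of_le (t : PTree α) (ts : Forest α) {i j k : ℕ} (h : j ≤ k + size t) :
    (subAux (t :: ts) i j k).1 = (subAux [t] i j k).1 := by
  obtain ⟨a, cs⟩ := t
  rw [size_node] at h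
  have hts : (subAux ts i j (subAux cs i j (k + 1)).2).1 = [] :=
    subAux_fst_eq_nil_of_le ts (le_subAux_snd cs (by omega))
  rw [subAux_node_cons, subAux_node_cons, hts, subAux_nil]
  split_ifs <;> rfl

theorem add_size_le_sizeL_of_getElem? :
    ∀ (F : Forest α) {n : ℕ} {t : PTree α}, (subtreesL F)[n]? = some t → n + size t ≤ sizeL F
  | [], n, t, h => by simp [subtreesL] at h
  | node a cs :: ts, n, t, h => by
    rw [subtreesL_node_cons] at h
    rw [sizeL_cons, size_node]
    rcases n with _ | n
    · obtain rfl := Option.some.inj h.symm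
      rw [size_node]; omega
    rw [List.getElem?_cons_succ] at h
    rcases Nat.lt_or_ge n (sizeL cs) with hn | hn
    · rw [List.getElem?_append_left (by rw [length_subtreesL]; omega)] at h
      linarith [add_size_le_sizeL_of_getElem? cs h]
    · rw [List.getElem?_append_right (by rw [length_subtreesL]; omega), length_subtreesL] at h
      have := add_size_le_sizeL_of_getElem? ts h
      omega

theorem subAux_fst_eq_of_getElem? :
    ∀ (F : Forest α) {k n i : ℕ} {t : PTree α}, (subtreesL F)[n]? = some t → k + n + 1 ≤ i →
      (subAux F i (k + n + size t) k).1 = (subAux [t] i (k + n + size t) (k + n)).1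
  | [], _, n, _, t, h, _ => by simp [subtreesL] at h
  | node a cs :: ts, k, n, i, t, h, hi => by
    rw [subtreesL_node_cons] at h
    rcases n with _ | n
    · obtain rfl := Option.some.inj h.symm
      exact subAux_cons_fst_of_le _ ts le_rfl
    rw [List.getElem?_cons_succ] at h
    rw [subAux_node_cons, if_neg (show ¬k + 1 > k + (n + 1) + size t by omega),
      if_neg (show ¬k + 1 ≥ i by omega)]
    rcases Nat.lt_or_ge n (sizeL cs) with hn | hn
    · rw [List.getElem?_append_left (by rw [length_subtreesL]; omega)] at h
      have hsize := add_size_le_sizeL_of_getElem? cs h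
      have hcs := subAux_fst_eq_of_getElem? cs (k := k + 1) (i := i) h (by omega)
      rw [show k + 1 + n = k + (n + 1) by omega] at hcs
      rw [hcs, subAux_fst_eq_nil_of_le ts (le_subAux_snd cs (by omega)), List.append_nil]
    · rw [List.getElem?_append_right (by rw [length_subtreesL]; omega), length_subtreesL] at h
      have hts := subAux_fst_eq_of_getElem? ts (k := k + 1 + sizeL cs) (i := i) h (by omega)
      have hsize := add_size_le_sizeL_of_getElem? ts h
      rw [show k + 1 + sizeL cs + (n - sizeL cs) = k + (n + 1) by omega] at hts
      rw [subAux_fst_eq_nil_of_lt cs (by omega) (by omega), subAux_snd_of_le cs (by omega), hts,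
        List.nil_append]

theorem subforest_eq_subAux_of_treeAt {F : Forest α} {i i' : ℕ} {t : PTree α}
    (h : treeAt F i = some t) (hi : 1 ≤ i) (hi' : i ≤ i') :
    subforest F i' (i + size t - 1) = (subAux [t] i' (i + size t - 1) (i - 1)).1 := by
  have := subAux_fst_eq_of_getElem? F (k := 0) (i := i') h (by omega)
  rwa [show 0 + (i - 1) + size t = i + size t - 1 by have := size_pos t; omega,
    Nat.zero_add] at this

theorem subforest_eq_singleton {F : Forest α} {i : ℕ} {t : PTree α} (h : treeAt F i = some t)
    (hi : 1 ≤ i) : subforest F i (i + size t - 1) = [t] := by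
  rw [subforest_eq_subAux_of_treeAt h hi le_rfl]
  exact subAux_fst_eq_self _ (by omega) (by simp; omega)

theorem subforest_eq_children {F : Forest α} {i : ℕ} {t : PTree α} (h : treeAt F i = some t)
    (hi : 1 ≤ i) : subforest F (i + 1) (i + size t - 1) = t.children := by
  rw [subforest_eq_subAux_of_treeAt h hi (Nat.le_succ i)]
  obtain ⟨a, cs⟩ := t
  rw [size_node, subAux_node_cons, if_neg (by omega), if_neg (by omega),
    subAux_fst_eq_self cs (by omega) (by omega), subAux_nil, List.append_nil, children]

end Subforest

/-- The recurrence for the tree edit distance between subtrees: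
`d_c(x̄_i, ȳ_j)` decomposes into deletion, insertion and replacement options over the
corresponding subforests. -/
theorem ted_decomposition {α : Type} (c : Cost α) (hnn : Nonneg c) (hse : SelfEq c)
    (htr : Triangle c) (F G : Forest α) (hF : F ≠ []) (hG : G ≠ [])
    (i : ℕ) (hi1 : 1 ≤ i) (hi2 : i ≤ fsize F)
    (j : ℕ) (hj1 : 1 ≤ j) (hj2 : j ≤ fsize G)
    (tx : PTree α) (htx : treeAt F i = some tx)
    (ty : PTree α) (hty : treeAt G j = some ty) :
    ted c tx ty =
      min (c (labelAt F i) none +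
            fdist c (subforest F (i + 1) (rlAt F i)) (subforest G j (rlAt G j)))
        (min (c none (labelAt G j) +
            fdist c (subforest F i (rlAt F i)) (subforest G (j + 1) (rlAt G j)))
          (c (labelAt F i) (labelAt G j) +
            fdist c (subforest F (i + 1) (rlAt F i)) (subforest G (j + 1) (rlAt G j)))) := by
  have hlx : labelAt F i = some tx.label := by rw [labelAt, htx]; rfl
  have hly : labelAt G j = some ty.label := by rw [labelAt, hty]; rfl
  rw [hlx, hly, rlAt_of_treeAt htx, rlAt_of_treeAt hty, subforest_eq_singleton htx hi1,
    subforest_eq_singleton hty hj1, subforest_eq_children htx hi1, subforest_eq_children hty hj1]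
  obtain ⟨x, xs⟩ := tx
  obtain ⟨y, ys⟩ := ty
  simp only [ted, fdist_eq_dp hnn hse htr, dp_node_cons_node_cons, List.append_nil, dp_nil_nil,
    add_zero, label, children]

end TED
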